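/- arXiv:2106.02243 — 2 statements merged into one kernel-verified Lean document; each statement's English description precedes it below -/
import Mathlib

section
/- Let M, K be positive integers, let g : Fin M → ℂ, let h : Fin K → Fin M → ℂ, and let P > 0. Then the infimum, over all b : Fin K → Fin M → ℂ satisfying ∑_{m} |b k m|² ≤ P for every k, of ∑_{k} ( ∑_{m} Re(conj(g m) · h k m · b k m) − 1 )², equals the infimum, over all β : Fin K → Fin M → ℝ with β k m ≥ 0 and ∑_{m} (β k m)² ≤ P for every k, of ∑_{k} ( ∑_{m} |g m| · |h k m| · β k m − 1 )². -/
open BigOperators Finset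

/-!
It suffices to match every feasible point of either problem by one of the other that is no
worse. A real design `β` is realised by the complex design `b_{km} = β_{km} e^{-i arg c_{km}}`,
`c_{km} = conj(g_m) h_{km}`, which has the same power and makes every term `Re(c b)` equal to
`|c| β`. Conversely, for a complex design `b` with per-sensor sum `s_k = ∑ₘ Re(c_{km} b_{km})`,
one has `|s_k| ≤ t_k = ∑ₘ |c_{km}| |b_{km}|`; rescaling the moduli `|b_{km}|` by a factor
`q_k ∈ [0, 1]` with `q_k t_k = max(s_k, 0)` gives a real design within the budget whose
objective is no larger.
-/

namespace Complex

theorem exists_norm_eq_and_re_mul_eq (c : ℂ) {β : ℝ} (hβ : 0 ≤ β) :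
    ∃ b : ℂ, ‖b‖ = β ∧ (c * b).re = ‖c‖ * β := by
  refine ⟨β * exp (-arg c * I), ?_, ?_⟩
  · rw [norm_mul, norm_real, Real.norm_of_nonneg hβ, ← ofReal_neg, norm_exp_ofReal_mul_I,
      mul_one]
  · have hc : c * (β * exp (-arg c * I)) = (‖c‖ * β : ℝ) :=
      calc c * (β * exp (-arg c * I))
          = ‖c‖ * exp (arg c * I) * (β * exp (-arg c * I)) := by rw [norm_mul_exp_arg_mul_I]
        _ = ‖c‖ * β * exp (arg c * I + -arg c * I) := by rw [exp_add]; ring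
        _ = (‖c‖ * β : ℝ) := by rw [← add_mul, add_neg_cancel, zero_mul, exp_zero, mul_one,
              ofReal_mul]
    rw [hc, ofReal_re]

theorem abs_sum_re_mul_le {ι : Type*} (s : Finset ι) (c b : ι → ℂ) :
    |∑ m ∈ s, (c m * b m).re| ≤ ∑ m ∈ s, ‖c m‖ * ‖b m‖ :=
  (abs_sum_le_sum_abs _ _).trans <| sum_le_sum fun _ _ =>
    (abs_re_le_norm _).trans (norm_mul _ _).le

end Complex

theorem exists_mem_Icc_sq_mul_sub_one_le {s t : ℝ} (hst : |s| ≤ t) :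
    ∃ q ∈ Set.Icc (0 : ℝ) 1, (q * t - 1) ^ 2 ≤ (s - 1) ^ 2 := by
  rcases le_or_gt s 0 with hs | hs
  · exact ⟨0, ⟨le_rfl, zero_le_one⟩, by nlinarith⟩
  · have ht : 0 < t := hs.trans_le ((le_abs_self s).trans hst)
    refine ⟨s / t, ⟨by positivity, div_le_one_of_le₀ ((le_abs_self s).trans hst) ht.le⟩,
      ?_⟩
    rw [div_mul_cancel₀ s ht.ne']

theorem exists_nonneg_le_norm_and_sq_sub_one_le {ι : Type*} [Fintype ι] (c b : ι → ℂ) :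
    ∃ β : ι → ℝ, (∀ m, 0 ≤ β m ∧ β m ≤ ‖b m‖) ∧
      (∑ m, ‖c m‖ * β m - 1) ^ 2 ≤ (∑ m, (c m * b m).re - 1) ^ 2 := by
  obtain ⟨q, ⟨hq0, hq1⟩, hq⟩ :=
    exists_mem_Icc_sq_mul_sub_one_le (Complex.abs_sum_re_mul_le univ c b)
  refine ⟨fun m => q * ‖b m‖,
    fun _ => ⟨mul_nonneg hq0 (norm_nonneg _), mul_le_of_le_one_left (norm_nonneg _) hq1⟩, ?_⟩
  have hsum : ∑ m, ‖c m‖ * (q * ‖b m‖) = q * ∑ m, ‖c m‖ * ‖b m‖ := by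
    rw [mul_sum]
    exact sum_congr rfl fun m _ => by ring
  rwa [hsum]

theorem stmt_10_general (M K : ℕ)
    (g : Fin M → ℂ) (h : Fin K → Fin M → ℂ) (P : ℝ) :
    sInf {v : ℝ | ∃ b : Fin K → Fin M → ℂ,
        (∀ k, ∑ m, ‖b k m‖ ^ 2 ≤ P) ∧
        v = ∑ k, ((∑ m, ((starRingEnd ℂ) (g m) * h k m * b k m).re) - 1) ^ 2}
    = sInf {v : ℝ | ∃ β : Fin K → Fin M → ℝ,
        (∀ k m, 0 ≤ β k m) ∧ (∀ k, ∑ m, (β k m) ^ 2 ≤ P) ∧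
        v = ∑ k, ((∑ m, ‖g m‖ * ‖h k m‖ * β k m) - 1) ^ 2} := by
  have hnorm : ∀ k m, ‖(starRingEnd ℂ) (g m) * h k m‖ = ‖g m‖ * ‖h k m‖ := fun _ _ => by
    rw [norm_mul, Complex.norm_conj]
  refine csInf_eq_csInf_of_forall_exists_le ?_ ?_
  · rintro _ ⟨b, hbP, rfl⟩
    choose β hβ hle using fun k =>
      exists_nonneg_le_norm_and_sq_sub_one_le (fun m => (starRingEnd ℂ) (g m) * h k m) (b k)
    have hβP : ∀ k, ∑ m, β k m ^ 2 ≤ P := fun k =>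
      (sum_le_sum fun m _ => pow_le_pow_left₀ (hβ k m).1 (hβ k m).2 2).trans (hbP k)
    refine ⟨_, ⟨β, fun k m => (hβ k m).1, hβP, rfl⟩, sum_le_sum fun k _ => ?_⟩
    simpa only [hnorm] using hle k
  · rintro _ ⟨β, hβ0, hβP, rfl⟩
    choose b hbβ hbre using fun k m =>
      Complex.exists_norm_eq_and_re_mul_eq ((starRingEnd ℂ) (g m) * h k m) (hβ0 k m)
    refine ⟨_, ⟨b, fun k => ?_, rfl⟩, le_of_eq ?_⟩
    · simpa only [hbβ] using hβP k
    · simp only [hbre, hnorm]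

/-- Section IV reduction: the optimal value of the Tx design problem depends only
on the moduli. The infimum over complex Tx scaling factors `b` of
`∑ₖ (∑ₘ Re(conj(gₘ) h_{km} b_{km}) - 1)²` under the per-sensor power constraint
equals the infimum of `∑ₖ (∑ₘ |gₘ||h_{km}| β_{km} - 1)²` over nonnegative real
amplitudes `β` under the same power constraint. -/
theorem stmt_10 (M K : ℕ) (hM : 0 < M) (hK : 0 < K)
    (g : Fin M → ℂ) (h : Fin K → Fin M → ℂ) (P : ℝ) (hP : 0 < P) :
    sInf {v : ℝ | ∃ b : Fin K → Fin M → ℂ,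
        (∀ k, ∑ m, ‖b k m‖ ^ 2 ≤ P) ∧
        v = ∑ k, ((∑ m, ((starRingEnd ℂ) (g m) * h k m * b k m).re) - 1) ^ 2}
    = sInf {v : ℝ | ∃ β : Fin K → Fin M → ℝ,
        (∀ k m, 0 ≤ β k m) ∧ (∀ k, ∑ m, (β k m) ^ 2 ≤ P) ∧
        v = ∑ k, ((∑ m, ‖g m‖ * ‖h k m‖ * β k m) - 1) ^ 2} :=
  stmt_10_general M K g h P
end

section
/- Let M, K be positive integers, let h : Fin K → Fin M → ℂ, let P > 0 and σ² > 0. Define V_RNO as the infimum over g : Fin M → ℂ and b : Fin K → Fin M → ℂ with ∑_m |b k m|² ≤ P for every k, of ∑_k ( ∑_m Re(conj(g m) · h k m · b k m) − 1 )² + (σ²/2) ∑_m |g m|²; and define V_CNO as the infimum over g̃ : Fin M → ℂ and b : Fin K → Fin M → ℂ with ∑_m |b k m|² ≤ P for every k, of ∑_k | ∑_m g̃ m · h k m · b k m − 1 |² + σ² ∑_m |g̃ m|². Then V_RNO ≤ V_CNO. -/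
/-!
Every complex-operation design is matched by a real-operation design with the same transmit
scalings `b` and receiver `g = conj g̃`: then `∑ₘ Re (conj (g m) h b) = Re (∑ₘ g̃ m h b)`, so each
squared-error term `(Re z - 1)²` of the real-operation MSE is bounded by `‖z - 1‖²`, and the noise
term only gets its weight `σ²` halved.
-/

open ComplexConjugate

theorem csInf_le_csInf_of_forall_exists_le {α : Type*} [ConditionallyCompleteLattice α]
    {A B : Set α} (hA : BddBelow A) (hB : B.Nonempty)
    (hAB : ∀ v ∈ B, ∃ u ∈ A, u ≤ v) : sInf A ≤ sInf B :=
  le_csInf hB fun v hv =>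
    let ⟨_, hu, huv⟩ := hAB v hv
    (csInf_le hA hu).trans huv

theorem Complex.sq_re_sub_one_le_sq_norm_sub_one (z : ℂ) : (z.re - 1) ^ 2 ≤ ‖z - 1‖ ^ 2 := by
  rw [Complex.sq_norm, sq]
  simpa using Complex.re_sq_le_normSq (z - 1)

section AirComp

variable {ι κ : Type*} [Fintype ι] [Fintype κ]

noncomputable def rnoMSE (h : κ → ι → ℂ) (σsq : ℝ) (g : ι → ℂ) (b : κ → ι → ℂ) : ℝ :=
  (∑ k, ((∑ m, (conj (g m) * h k m * b k m).re) - 1) ^ 2) + (σsq / 2) * ∑ m, ‖g m‖ ^ 2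

noncomputable def cnoMSE (h : κ → ι → ℂ) (σsq : ℝ) (gt : ι → ℂ) (b : κ → ι → ℂ) : ℝ :=
  (∑ k, ‖(∑ m, gt m * h k m * b k m) - 1‖ ^ 2) + σsq * ∑ m, ‖gt m‖ ^ 2

theorem rnoMSE_nonneg (h : κ → ι → ℂ) {σsq : ℝ} (hσ : 0 ≤ σsq) (g : ι → ℂ)
    (b : κ → ι → ℂ) : 0 ≤ rnoMSE h σsq g b := by
  unfold rnoMSE
  positivity

theorem rnoMSE_conj_le_cnoMSE (h : κ → ι → ℂ) {σsq : ℝ} (hσ : 0 ≤ σsq) (gt : ι → ℂ)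
    (b : κ → ι → ℂ) : rnoMSE h σsq (fun m => conj (gt m)) b ≤ cnoMSE h σsq gt b := by
  unfold rnoMSE cnoMSE
  gcongr ?_ + ?_
  · refine Finset.sum_le_sum fun k _ => ?_
    simp only [Complex.conj_conj, ← Complex.re_sum]
    exact Complex.sq_re_sub_one_le_sq_norm_sub_one _
  · simp only [Complex.norm_conj]
    gcongr
    linarith

end AirComp

theorem stmt_11_general (M K : ℕ)
    (h : Fin K → Fin M → ℂ) (P σsq : ℝ) (hP : 0 < P) (hσ : 0 < σsq) :
    sInf {v : ℝ | ∃ g : Fin M → ℂ, ∃ b : Fin K → Fin M → ℂ,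
        (∀ k, ∑ m, ‖b k m‖ ^ 2 ≤ P) ∧
        v = (∑ k, ((∑ m, ((starRingEnd ℂ) (g m) * h k m * b k m).re) - 1) ^ 2)
            + (σsq / 2) * ∑ m, ‖g m‖ ^ 2}
    ≤ sInf {v : ℝ | ∃ gt : Fin M → ℂ, ∃ b : Fin K → Fin M → ℂ,
        (∀ k, ∑ m, ‖b k m‖ ^ 2 ≤ P) ∧
        v = (∑ k, ‖(∑ m, gt m * h k m * b k m) - 1‖ ^ 2)
            + σsq * ∑ m, ‖gt m‖ ^ 2} := by
  refine csInf_le_csInf_of_forall_exists_le ?_ ⟨cnoMSE h σsq 0 0, 0, 0, ?_, rfl⟩ ?_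
  · refine ⟨0, ?_⟩
    rintro _ ⟨g, b, -, rfl⟩
    exact rnoMSE_nonneg h hσ.le g b
  · exact fun _ => by simpa using hP.le
  · rintro _ ⟨gt, b, hb, rfl⟩
    exact ⟨_, ⟨fun m => conj (gt m), b, hb, rfl⟩, rnoMSE_conj_le_cnoMSE h hσ.le gt b⟩

/-- Section IV-A: the optimal computation MSE of the real-number-operation
fusion center is no larger than that of the complex-number-operation one. -/
theorem stmt_11 (M K : ℕ) (hM : 0 < M) (hK : 0 < K)
    (h : Fin K → Fin M → ℂ) (P σsq : ℝ) (hP : 0 < P) (hσ : 0 < σsq) :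
    sInf {v : ℝ | ∃ g : Fin M → ℂ, ∃ b : Fin K → Fin M → ℂ,
        (∀ k, ∑ m, ‖b k m‖ ^ 2 ≤ P) ∧
        v = (∑ k, ((∑ m, ((starRingEnd ℂ) (g m) * h k m * b k m).re) - 1) ^ 2)
            + (σsq / 2) * ∑ m, ‖g m‖ ^ 2}
    ≤ sInf {v : ℝ | ∃ gt : Fin M → ℂ, ∃ b : Fin K → Fin M → ℂ,
        (∀ k, ∑ m, ‖b k m‖ ^ 2 ≤ P) ∧
        v = (∑ k, ‖(∑ m, gt m * h k m * b k m) - 1‖ ^ 2)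
            + σsq * ∑ m, ‖gt m‖ ^ 2} :=
  stmt_11_general M K h P σsq hP hσ
end
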